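/- A numerical semigroup S with Frobenius number F is irreducible if and only if the set {x ∈ ℕ \ S | F - x ∉ S and 2x ≠ F} is empty. -/

import Mathlib

/-!
Write `F` for the Frobenius number of `S` and `A` for the set of gaps `x` with `F - x ∉ S` and
`2 * x ≠ F`. Adjoining `F` to `S` always gives a numerical semigroup. If `A` is nonempty, adjoining
its largest element `x` does too: `F < 2 * x` by maximality, and a gap `s + x` with `s ∈ S \ {0}`
would be a larger element of `A`. Since `x ≠ F`, `S` is the intersection of these two extensions.
Conversely, if `A` is empty, every numerical semigroup `T ⊋ S` contains a gap `y` of `S`, and then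
`F = (F - y) + y` or `F = y + y` lies in `T`; so `F` lies in any intersection of two such `T`.
-/

open Set

/-- A numerical semigroup: contains 0, closed under addition, finite complement. -/
def IsNumSgp (S : Set ℕ) : Prop :=
  0 ∈ S ∧ (∀ a ∈ S, ∀ b ∈ S, a + b ∈ S) ∧ (Sᶜ : Set ℕ).Finite

/-- The multiplicity: least positive element. -/
noncomputable def mult (S : Set ℕ) : ℕ := sInf {n | n ∈ S ∧ n ≠ 0}

/-- next_S(s) = min { x ∈ S | s < x }. -/
noncomputable def nextS (S : Set ℕ) (s : ℕ) : ℕ := sInf {x | x ∈ S ∧ s < x}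

/-- The concentration C(S) = max { next_S(s) - s | s ∈ S \ {0} }. -/
noncomputable def conc (S : Set ℕ) : ℕ :=
  sSup {d | ∃ s ∈ S, s ≠ 0 ∧ d = nextS S s - s}

/-- The Frobenius number: largest gap. -/
noncomputable def frob (S : Set ℕ) : ℕ := sSup (Sᶜ : Set ℕ)

/-- The genus: number of gaps. -/
noncomputable def genus (S : Set ℕ) : ℕ := (Sᶜ : Set ℕ).ncard

/-- x is a minimal generator of S. -/
def IsMinGen (S : Set ℕ) (x : ℕ) : Prop :=
  x ∈ S ∧ x ≠ 0 ∧ ¬∃ a ∈ S, ∃ b ∈ S, a ≠ 0 ∧ b ≠ 0 ∧ a + b = x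

/-- The embedding dimension: number of minimal generators. -/
noncomputable def edim (S : Set ℕ) : ℕ := {x | IsMinGen S x}.ncard

/-- n(S): the number of elements of S smaller than the Frobenius number. -/
noncomputable def nS (S : Set ℕ) : ℕ := {s | s ∈ S ∧ s < frob S}.ncard

/-- The half-line Δ(m) = {0} ∪ {m, m+1, ...}. -/
def Delta (m : ℕ) : Set ℕ := {0} ∪ {n | m ≤ n}

def IsHalfLine (S : Set ℕ) : Prop := ∃ m, S = Delta m

/-- An irreducible numerical semigroup. -/
def Irred (S : Set ℕ) : Prop :=
  ¬∃ T₁ T₂ : Set ℕ, IsNumSgp T₁ ∧ IsNumSgp T₂ ∧ S ⊂ T₁ ∧ S ⊂ T₂ ∧ S = T₁ ∩ T₂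

namespace IsNumSgp

variable {S : Set ℕ}

theorem le_frob (hS : IsNumSgp S) {n : ℕ} (hn : n ∉ S) : n ≤ frob S :=
  le_csSup hS.2.2.bddAbove hn

theorem mem_of_frob_lt (hS : IsNumSgp S) {n : ℕ} (hn : frob S < n) : n ∈ S :=
  by_contra fun h => hn.not_ge (hS.le_frob h)

theorem frob_notMem (hS : IsNumSgp S) (hne : (Sᶜ : Set ℕ).Nonempty) : frob S ∉ S :=
  hne.csSup_mem hS.2.2

theorem insert_of_forall_add_mem (hS : IsNumSgp S) {x : ℕ} (hxx : x + x ∈ S)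
    (hsx : ∀ s ∈ S, s ≠ 0 → s + x ∈ S) : IsNumSgp (insert x S) := by
  have hadd : ∀ s ∈ S, s + x ∈ insert x S := fun s hs => by
    rcases eq_or_ne s 0 with rfl | hs0
    · exact Or.inl (zero_add x)
    · exact Or.inr (hsx s hs hs0)
  refine ⟨Or.inr hS.1, ?_, hS.2.2.subset (compl_subset_compl.mpr (subset_insert x S))⟩
  rintro a (rfl | ha) b (rfl | hb)
  · exact Or.inr hxx
  · exact add_comm b a ▸ hadd b hb
  · exact hadd a ha
  · exact Or.inr (hS.2.1 a ha b hb)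

theorem insert_frob (hS : IsNumSgp S) : IsNumSgp (insert (frob S) S) := by
  refine hS.insert_of_forall_add_mem ?_ fun s _ hs0 => hS.mem_of_frob_lt (by omega)
  rcases eq_or_ne (frob S) 0 with h | h
  · simpa [h] using hS.1
  · exact hS.mem_of_frob_lt (by omega)

theorem insert_of_maximal (hS : IsNumSgp S) {x : ℕ}
    (hx : x ∉ S) (hFx : frob S - x ∉ S) (h2x : 2 * x ≠ frob S)
    (hmax : ∀ y, y ∉ S → frob S - y ∉ S → 2 * y ≠ frob S → y ≤ x) :
    IsNumSgp (insert x S) := by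
  have hxF := hS.le_frob hx
  have hF2x : frob S < 2 * x := by
    by_contra! h
    have := hmax (frob S - x) hFx (by rwa [Nat.sub_sub_self hxF]) (by omega)
    omega
  refine hS.insert_of_forall_add_mem (hS.mem_of_frob_lt (by omega)) fun s hs hs0 =>
    by_contra fun hsx => ?_
  have hsxF := hS.le_frob hsx
  have hFsx : frob S - (s + x) ∉ S := fun h => hFx <| by
    simpa [show frob S - (s + x) + s = frob S - x by omega] using hS.2.1 _ h s hs
  have := hmax (s + x) hsx hFsx (by omega)
  omega

theorem frob_mem_of_ssubset (hS : IsNumSgp S)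
    (hA : ∀ y, y ∉ S → frob S - y ∉ S → 2 * y = frob S)
    {T : Set ℕ} (hT : IsNumSgp T) (hST : S ⊂ T) : frob S ∈ T := by
  obtain ⟨y, hyT, hyS⟩ := exists_of_ssubset hST
  have hyF := hS.le_frob hyS
  by_cases hFy : frob S - y ∈ S
  · simpa [Nat.sub_add_cancel hyF] using hT.2.1 _ (hST.1 hFy) y hyT
  · simpa [← two_mul, hA y hyS hFy] using hT.2.1 y hyT y hyT

theorem irred_of_forall_gap (hS : IsNumSgp S)
    (hA : ∀ y, y ∉ S → frob S - y ∉ S → 2 * y = frob S) : Irred S := by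
  rintro ⟨T₁, T₂, hT₁, hT₂, hST₁, hST₂, rfl⟩
  obtain ⟨y, -, hy⟩ := exists_of_ssubset hST₁
  exact hS.frob_notMem ⟨y, hy⟩
    ⟨hS.frob_mem_of_ssubset hA hT₁ hST₁, hS.frob_mem_of_ssubset hA hT₂ hST₂⟩

end IsNumSgp

theorem not_irred_of_insert {S : Set ℕ} {x y : ℕ} (hx : x ∉ S) (hy : y ∉ S) (hxy : x ≠ y)
    (hSx : IsNumSgp (insert x S)) (hSy : IsNumSgp (insert y S)) : ¬Irred S := fun h =>
  h ⟨_, _, hSx, hSy, ssubset_insert hx, ssubset_insert hy, by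
    ext z
    simp only [mem_inter_iff, mem_insert_iff]
    constructor
    · exact fun hz => ⟨Or.inr hz, Or.inr hz⟩
    · rintro ⟨rfl | hz, rfl | hz⟩ <;> first | exact absurd rfl hxy | assumption⟩

theorem stmt17_general (S : Set ℕ) (hS : IsNumSgp S) :
    Irred S ↔ {x : ℕ | x ∉ S ∧ frob S - x ∉ S ∧ 2 * x ≠ frob S} = ∅ := by
  rw [eq_empty_iff_forall_notMem]
  constructor
  · intro hirr z hz
    obtain ⟨x, ⟨hx, hFx, h2x⟩, hmax⟩ :=
      exists_max_image _ id (hS.2.2.subset fun y hy => hy.1) ⟨z, hz⟩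
    have hxF : x ≠ frob S := fun h => hFx (by simpa [h] using hS.1)
    have hSx := hS.insert_of_maximal hx hFx h2x fun y hy hFy h2y => hmax y ⟨hy, hFy, h2y⟩
    exact not_irred_of_insert hx (hS.frob_notMem ⟨x, hx⟩) hxF hSx hS.insert_frob hirr
  · exact fun hA =>
      hS.irred_of_forall_gap fun y hy hFy => by_contra fun h2y => hA y ⟨hy, hFy, h2y⟩

theorem stmt17 (S : Set ℕ) (hS : IsNumSgp S) (hne : (Sᶜ : Set ℕ).Nonempty) :
    Irred S ↔ {x : ℕ | x ∉ S ∧ frob S - x ∉ S ∧ 2 * x ≠ frob S} = ∅ :=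
  stmt17_general S hS
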